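/- The squared overlap between the honest state ψ₁ and Alice's cheating state ψ̃₁ equals 3/4: |⟨ψ₁, ψ̃₁⟩|² = 3/4. Consequently, if Alice sends ψ̃₁ instead of ψ₁, Bob's projective measurement onto ψ₁ accepts with probability exactly 3/4. -/

import Mathlib

noncomputable section

/-- The standard orthonormal basis vector `e_{(i,j)}` of `ℂ³ ⊗ ℂ³`,
modelled as `EuclideanSpace ℂ (Fin 3 × Fin 3)`. -/
def e (p : Fin 3 × Fin 3) : EuclideanSpace ℂ (Fin 3 × Fin 3) :=
  EuclideanSpace.single p 1

/-- The honest state `ψ₁ = (1/√2)(e_{(1,1)} + e_{(0,2)})`. -/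
def ψ₁ : EuclideanSpace ℂ (Fin 3 × Fin 3) :=
  (1 / (Real.sqrt 2 : ℂ)) • (e (1, 1) + e (0, 2))

/-- Alice's cheating state `ψ̃₁ = (1/√6)(e_{(1,0)} + e_{(1,1)} + 2 e_{(0,2)})`. -/
def ψt₁ : EuclideanSpace ℂ (Fin 3 × Fin 3) :=
  (1 / (Real.sqrt 6 : ℂ)) • (e (1, 0) + e (1, 1) + (2 : ℂ) • e (0, 2))

open scoped InnerProductSpace

theorem norm_inner_one_div_sqrt_smul_sq {E : Type*} [NormedAddCommGroup E]
    [InnerProductSpace ℂ E] {a b : ℝ} (ha : 0 ≤ a) (hb : 0 ≤ b) (x y : E) :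
    ‖⟪(1 / (Real.sqrt a : ℂ)) • x, (1 / (Real.sqrt b : ℂ)) • y⟫_ℂ‖ ^ 2 =
      ‖⟪x, y⟫_ℂ‖ ^ 2 / (a * b) := by
  simp only [inner_smul_left, inner_smul_right, norm_mul, Complex.norm_conj, norm_div, norm_one,
    Complex.norm_real, Real.norm_of_nonneg (Real.sqrt_nonneg _)]
  field_simp
  rw [Real.sq_sqrt ha, Real.sq_sqrt hb, mul_comm]

theorem inner_e (p q : Fin 3 × Fin 3) : ⟪e p, e q⟫_ℂ = if p = q then 1 else 0 :=
  orthonormal_iff_ite.mp EuclideanSpace.orthonormal_single p q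

theorem inner_unnormalized_psi1_psit1 :
    ⟪e (1, 1) + e (0, 2), e (1, 0) + e (1, 1) + (2 : ℂ) • e (0, 2)⟫_ℂ = 3 := by
  simp only [inner_add_left, inner_add_right, inner_smul_right, inner_e, Prod.mk.injEq]
  norm_num

/-- The squared overlap between the honest state `ψ₁` and Alice's cheating state `ψ̃₁`
is `3/4`; this is the probability that Bob's projective measurement onto `ψ₁` accepts
when Alice sent `ψ̃₁` instead of `ψ₁`. -/
theorem overlap_psi1_psit1 : ‖(inner ℂ ψ₁ ψt₁ : ℂ)‖ ^ 2 = 3 / 4 := by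
  rw [ψ₁, ψt₁, norm_inner_one_div_sqrt_smul_sq (by norm_num) (by norm_num),
    inner_unnormalized_psi1_psit1]
  norm_num
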